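/- arXiv:q-alg/9602035 — 5 statements merged into one kernel-verified Lean document; each statement's English description precedes it below -/
import Mathlib

section
/- In the quantum plane with q not a root of unity, there is no nonzero middle-linear metric on the bimodule of 1-forms: any family of elements g_{ξξ}, g_{ξη}, g_{ηξ}, g_{ηη} ∈ A satisfying the middle-linearity equations x·g_{ξξ} = q⁴·g_{ξξ}·x, y·g_{ξξ} = q²·g_{ξξ}·y, x·g_{ξη} = q³·g_{ξη}·x + q²(q²−1)·g_{ξξ}·y, y·g_{ξη} = q³·g_{ξη}·y, x·g_{ηξ} = q³·g_{ηξ}·x + q(q²−1)·g_{ξξ}·y, y·g_{ηξ} = q³·g_{ηξ}·y, x·g_{ηη} = q²·g_{ηη}·x + q²(q²−1)·g_{ξη}·y + q(q²−1)·g_{ηξ}·y, y·g_{ηη} = q⁴·g_{ηη}·y must be identically zero. -/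
inductive QRel (q : ℂ) : FreeAlgebra ℂ (Fin 2) → FreeAlgebra ℂ (Fin 2) → Prop
  | rel : QRel q (FreeAlgebra.ι ℂ 0 * FreeAlgebra.ι ℂ 1)
      (q • (FreeAlgebra.ι ℂ 1 * FreeAlgebra.ι ℂ 0))

abbrev QPlane (q : ℂ) : Type := RingQuot (QRel q)

noncomputable def Qx (q : ℂ) : QPlane q :=
  RingQuot.mkAlgHom ℂ (QRel q) (FreeAlgebra.ι ℂ 0)

noncomputable def Qy (q : ℂ) : QPlane q :=
  RingQuot.mkAlgHom ℂ (QRel q) (FreeAlgebra.ι ℂ 1)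

/-!
In the basis `y ^ r * x ^ p` of the quantum plane, left multiplication by `y` sends
`y ^ r * x ^ p` to `y ^ (r + 1) * x ^ p`, while right multiplication by `y` sends it to
`q ^ p • y ^ (r + 1) * x ^ p`. So `y * g = q ^ k • (g * y)` says that the coefficient `c` of
`y ^ r * x ^ p` in `g` satisfies `c = q ^ (k + p) * c`, and `q ^ (k + p) ≠ 1` forces `c = 0`.

To have coefficients at all, let the algebra act on `(ℕ × ℕ) →₀ ℂ` by left multiplication in this
basis and take the image of the vector of `1`. Right multiplications act by operators commuting
with this representation, and summing the coefficients against the monomials recovers `g`.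
-/

namespace QPlane

open Finsupp

variable {q : ℂ}

theorem Qx_mul_Qy : Qx q * Qy q = q • (Qy q * Qx q) := by
  rw [Qx, Qy, ← map_mul, ← map_mul, ← map_smul]
  exact RingQuot.mkAlgHom_rel ℂ QRel.rel

theorem Qx_pow_mul_Qy (p : ℕ) : Qx q ^ p * Qy q = q ^ p • (Qy q * Qx q ^ p) := by
  induction p with
  | zero => simp
  | succ p ih =>
    rw [pow_succ, mul_assoc, Qx_mul_Qy, mul_smul_comm, ← mul_assoc, ih, smul_mul_assoc,
      smul_smul, mul_assoc, ← pow_succ, ← pow_succ']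

theorem induction_on_mul_right {P : QPlane q → Prop} (one : P 1)
    (add : ∀ g h, P g → P h → P (g + h)) (smul : ∀ (c : ℂ) g, P g → P (c • g))
    (mul_Qx : ∀ g, P g → P (g * Qx q)) (mul_Qy : ∀ g, P g → P (g * Qy q)) (g : QPlane q) :
    P g := by
  obtain ⟨a, rfl⟩ := RingQuot.mkAlgHom_surjective ℂ (QRel q) g
  suffices ∀ g, P g → P (g * RingQuot.mkAlgHom ℂ (QRel q) a) by simpa using this 1 one
  induction a using FreeAlgebra.induction with
  | grade0 c =>
    intro g hg
    rw [AlgHom.commutes, ← Algebra.commutes, ← Algebra.smul_def]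
    exact smul c g hg
  | grade1 i => fin_cases i <;> intro g hg; exacts [mul_Qx g hg, mul_Qy g hg]
  | mul a b ha hb => intro g hg; simpa [mul_assoc] using hb _ (ha g hg)
  | add a b ha hb => intro g hg; simpa [mul_add] using add _ _ (ha g hg) (hb g hg)

section WeightedShift

variable {α R : Type*} [CommSemiring R]

noncomputable def weightedShift (s : α → α) (w : α → R) : Module.End R (α →₀ R) :=
  lsum R fun a => w a • lsingle (s a)

@[simp]
theorem weightedShift_single (s : α → α) (w : α → R) (a : α) (c : R) :
    weightedShift s w (single a c) = single (s a) (w a * c) := by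
  simp [weightedShift, smul_single]

theorem weightedShift_apply_apply {s : α → α} (hs : s.Injective) (w : α → R) (v : α →₀ R)
    (a : α) : weightedShift s w v (s a) = w a * v a := by
  induction v using induction_linear with
  | zero => simp
  | add f g hf hg => simp [hf, hg, mul_add]
  | single b c =>
    rcases eq_or_ne b a with rfl | hba
    · simp
    · simp [hba, hs.ne hba]

theorem weightedShift_mul (s s' : α → α) (w w' : α → R) :
    weightedShift s w * weightedShift s' w' =
      weightedShift (s ∘ s') (fun a => w (s' a) * w' a) := by
  ext a : 2
  simp

theorem smul_weightedShift (c : R) (s : α → α) (w : α → R) :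
    c • weightedShift s w = weightedShift s (c • w) := by
  ext a : 2
  simp

theorem commute_weightedShift {s s' : α → α} {w w' : α → R} (hs : s ∘ s' = s' ∘ s)
    (hw : ∀ a, w (s' a) * w' a = w' (s a) * w a) :
    Commute (weightedShift s w) (weightedShift s' w') := by
  simp only [Commute, SemiconjBy, weightedShift_mul, hs, hw]

end WeightedShift

/-! `single (p, r) 1` stands for the monomial `y ^ r * x ^ p`. -/

variable (q) in
noncomputable def leftMulX : Module.End ℂ ((ℕ × ℕ) →₀ ℂ) :=
  weightedShift (fun a => (a.1 + 1, a.2)) (fun a => q ^ a.2)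

noncomputable def leftMulY : Module.End ℂ ((ℕ × ℕ) →₀ ℂ) :=
  weightedShift (fun a => (a.1, a.2 + 1)) 1

noncomputable def rightMulX : Module.End ℂ ((ℕ × ℕ) →₀ ℂ) :=
  weightedShift (fun a => (a.1 + 1, a.2)) 1

variable (q) in
noncomputable def rightMulY : Module.End ℂ ((ℕ × ℕ) →₀ ℂ) :=
  weightedShift (fun a => (a.1, a.2 + 1)) (fun a => q ^ a.1)

theorem leftMulX_mul_leftMulY : leftMulX q * leftMulY = q • (leftMulY * leftMulX q) := by
  simp only [leftMulX, leftMulY, weightedShift_mul, smul_weightedShift]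
  congr 1
  funext a
  simp [pow_succ']

theorem commute_rightMulX_leftMulX : Commute rightMulX (leftMulX q) :=
  commute_weightedShift rfl fun _ => by simp

theorem commute_rightMulX_leftMulY : Commute rightMulX leftMulY :=
  commute_weightedShift rfl fun _ => rfl

theorem commute_rightMulY_leftMulX : Commute (rightMulY q) (leftMulX q) :=
  commute_weightedShift rfl fun _ => by simp only [pow_succ]; ring

theorem commute_rightMulY_leftMulY : Commute (rightMulY q) leftMulY :=
  commute_weightedShift rfl fun _ => by simp

variable (q) in
noncomputable def rep : QPlane q →ₐ[ℂ] Module.End ℂ ((ℕ × ℕ) →₀ ℂ) :=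
  RingQuot.liftAlgHom ℂ ⟨FreeAlgebra.lift ℂ ![leftMulX q, leftMulY], by
    rintro _ _ ⟨⟩
    simpa using leftMulX_mul_leftMulY⟩

@[simp]
theorem rep_Qx : rep q (Qx q) = leftMulX q := by
  simp [rep, Qx]

@[simp]
theorem rep_Qy : rep q (Qy q) = leftMulY := by
  simp [rep, Qy]

theorem commute_rep {T : Module.End ℂ ((ℕ × ℕ) →₀ ℂ)} (hx : Commute T (leftMulX q))
    (hy : Commute T leftMulY) (g : QPlane q) : Commute T (rep q g) := by
  induction g using induction_on_mul_right with
  | one => simp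
  | add g h hg hh => simpa using hg.add_right hh
  | smul c g hg => simpa using hg.smul_right c
  | mul_Qx g hg => simpa using hg.mul_right hx
  | mul_Qy g hg => simpa using hg.mul_right hy

variable (q) in
noncomputable def coeffs : QPlane q →ₗ[ℂ] (ℕ × ℕ) →₀ ℂ :=
  LinearMap.applyₗ (single (0, 0) 1) ∘ₗ (rep q).toLinearMap

theorem coeffs_apply (g : QPlane q) : coeffs q g = rep q g (single (0, 0) 1) := rfl

theorem coeffs_Qy_mul (g : QPlane q) : coeffs q (Qy q * g) = leftMulY (coeffs q g) := by
  simp [coeffs_apply]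

theorem coeffs_mul_of_commute {a : QPlane q} {T : Module.End ℂ ((ℕ × ℕ) →₀ ℂ)}
    (hT : ∀ g, Commute T (rep q g)) (ha : coeffs q a = T (single (0, 0) 1)) (g : QPlane q) :
    coeffs q (g * a) = T (coeffs q g) := by
  rw [coeffs_apply, map_mul, Module.End.mul_apply, ← coeffs_apply, ha, ← Module.End.mul_apply,
    ← (hT g).eq]
  rfl

theorem coeffs_mul_Qx (g : QPlane q) : coeffs q (g * Qx q) = rightMulX (coeffs q g) :=
  coeffs_mul_of_commute (commute_rep commute_rightMulX_leftMulX commute_rightMulX_leftMulY)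
    (by simp [coeffs_apply, leftMulX, rightMulX]) g

theorem coeffs_mul_Qy (g : QPlane q) : coeffs q (g * Qy q) = rightMulY q (coeffs q g) :=
  coeffs_mul_of_commute (commute_rep commute_rightMulY_leftMulX commute_rightMulY_leftMulY)
    (by simp [coeffs_apply, leftMulY, rightMulY]) g

variable (q) in
noncomputable def ofCoeffs : ((ℕ × ℕ) →₀ ℂ) →ₗ[ℂ] QPlane q :=
  linearCombination ℂ fun a => Qy q ^ a.2 * Qx q ^ a.1

theorem ofCoeffs_rightMulX (v : (ℕ × ℕ) →₀ ℂ) :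
    ofCoeffs q (rightMulX v) = ofCoeffs q v * Qx q := by
  induction v using induction_linear with
  | zero => simp
  | add v w hv hw => simp [hv, hw, add_mul]
  | single a c => simp [ofCoeffs, rightMulX, pow_succ, mul_assoc]

theorem ofCoeffs_rightMulY (v : (ℕ × ℕ) →₀ ℂ) :
    ofCoeffs q (rightMulY q v) = ofCoeffs q v * Qy q := by
  induction v using induction_linear with
  | zero => simp
  | add v w hv hw => simp [hv, hw, add_mul]
  | single a c =>
    simp only [ofCoeffs, rightMulY, weightedShift_single, linearCombination_single]
    rw [smul_mul_assoc, mul_assoc, Qx_pow_mul_Qy, mul_smul_comm, smul_smul, ← mul_assoc,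
      ← pow_succ, mul_comm c]

theorem ofCoeffs_coeffs (g : QPlane q) : ofCoeffs q (coeffs q g) = g := by
  induction g using induction_on_mul_right with
  | one => simp [coeffs_apply, ofCoeffs]
  | add g h hg hh => rw [map_add, map_add, hg, hh]
  | smul c g hg => rw [map_smul, map_smul, hg]
  | mul_Qx g hg => rw [coeffs_mul_Qx, ofCoeffs_rightMulX, hg]
  | mul_Qy g hg => rw [coeffs_mul_Qy, ofCoeffs_rightMulY, hg]

theorem coeffs_injective : Function.Injective (coeffs q) :=
  Function.LeftInverse.injective ofCoeffs_coeffs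

theorem eq_zero_of_Qy_mul_eq_pow_smul (hq : ∀ n : ℕ, 0 < n → q ^ n ≠ 1) {k : ℕ} (hk : 0 < k)
    {g : QPlane q} (h : Qy q * g = q ^ k • (g * Qy q)) : g = 0 := by
  have hv : leftMulY (coeffs q g) = q ^ k • rightMulY q (coeffs q g) := by
    rw [← coeffs_Qy_mul, h, map_smul, coeffs_mul_Qy]
  have hs : Function.Injective fun a : ℕ × ℕ => (a.1, a.2 + 1) := fun a b hab => by
    simpa [Prod.ext_iff] using hab
  refine (injective_iff_map_eq_zero _).mp coeffs_injective g (Finsupp.ext fun ⟨p, r⟩ => ?_)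
  have hpr := congrArg (· (p, r + 1)) hv
  simp only [leftMulY, rightMulY, Finsupp.smul_apply] at hpr
  rw [weightedShift_apply_apply hs _ _ (p, r), weightedShift_apply_apply hs _ _ (p, r)] at hpr
  simp only [Pi.one_apply, one_mul, smul_eq_mul] at hpr
  have hne : q ^ (k + p) ≠ 1 := hq _ (by omega)
  have : (1 - q ^ (k + p)) * coeffs q g (p, r) = 0 := by
    rw [pow_add]
    linear_combination hpr
  simpa [sub_eq_zero, hne.symm] using this

end QPlane

theorem no_middle_linear_metric_general (q : ℂ)
    (hq : ∀ n : ℕ, 0 < n → q ^ n ≠ 1)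
    (g1 g2 g3 g4 : QPlane q)
    (h2 : Qy q * g1 = (q ^ 2) • (g1 * Qy q))
    (h4 : Qy q * g2 = (q ^ 3) • (g2 * Qy q))
    (h6 : Qy q * g3 = (q ^ 3) • (g3 * Qy q))
    (h8 : Qy q * g4 = (q ^ 4) • (g4 * Qy q)) :
    g1 = 0 ∧ g2 = 0 ∧ g3 = 0 ∧ g4 = 0 :=
  ⟨QPlane.eq_zero_of_Qy_mul_eq_pow_smul hq two_pos h2,
    QPlane.eq_zero_of_Qy_mul_eq_pow_smul hq three_pos h4,
    QPlane.eq_zero_of_Qy_mul_eq_pow_smul hq three_pos h6,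
    QPlane.eq_zero_of_Qy_mul_eq_pow_smul hq four_pos h8⟩

/-- for q not a root of unity there is no nonzero middle-linear
metric on the bimodule of 1-forms of the quantum plane: any family
g₁ = g_{ξξ}, g₂ = g_{ξη}, g₃ = g_{ηξ}, g₄ = g_{ηη} of elements of A satisfying
the middle-linearity equations must vanish identically. -/
theorem no_middle_linear_metric (q : ℂ) (hq0 : q ≠ 0)
    (hq : ∀ n : ℕ, 0 < n → q ^ n ≠ 1)
    (g1 g2 g3 g4 : QPlane q)
    (h1 : Qx q * g1 = (q ^ 4) • (g1 * Qx q))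
    (h2 : Qy q * g1 = (q ^ 2) • (g1 * Qy q))
    (h3 : Qx q * g2 = (q ^ 3) • (g2 * Qx q) + (q ^ 2 * (q ^ 2 - 1)) • (g1 * Qy q))
    (h4 : Qy q * g2 = (q ^ 3) • (g2 * Qy q))
    (h5 : Qx q * g3 = (q ^ 3) • (g3 * Qx q) + (q * (q ^ 2 - 1)) • (g1 * Qy q))
    (h6 : Qy q * g3 = (q ^ 3) • (g3 * Qy q))
    (h7 : Qx q * g4 = (q ^ 2) • (g4 * Qx q) + (q ^ 2 * (q ^ 2 - 1)) • (g2 * Qy q)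
        + (q * (q ^ 2 - 1)) • (g3 * Qy q))
    (h8 : Qy q * g4 = (q ^ 4) • (g4 * Qy q)) :
    g1 = 0 ∧ g2 = 0 ∧ g3 = 0 ∧ g4 = 0 :=
  no_middle_linear_metric_general q hq g1 g2 g3 g4 h2 h4 h6 h8
end

section
/- In the quantum plane differential calculus, the commutation relation x^n η = q^n η x^n + (q²−1) Q_n ξ x^{n−1} y holds for all n ≥ 1, where Q_n = Σ_{k=1}^{n} q^{2(k−1)}. -/
/-! Induct on `n`, multiplying by `x` on the left. Moving `x` past `η` yields
`q η x + (q² - 1) ξ y`, and the stray term `q^n ξ y x^n` equals `ξ x^n y` because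
`x^n y = q^n y x^n`; moving `x` past `ξ` multiplies the old coefficient by `q²`. Hence the
coefficients satisfy `c₁ = q² - 1`, `c_{n+1} = (q² - 1) + q² c_n`, solved by `(q² - 1) Q_n`. -/

open Finset

theorem pow_mul_eq_smul_mul_pow_of_mul_eq_smul {R A : Type*} [Monoid R] [Monoid A]
    [MulAction R A] [IsScalarTower R A A] [SMulCommClass R A A] {r : R} {a b : A}
    (h : a * b = r • (b * a)) (n : ℕ) : a ^ n * b = r ^ n • (b * a ^ n) := by
  induction n with
  | zero => simp
  | succ n ih =>
    rw [pow_succ', mul_assoc, ih, mul_smul_comm, ← mul_assoc, h, smul_mul_assoc, smul_smul,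
      ← pow_succ, mul_assoc, ← pow_succ']

section QuantumPlane

variable {R A : Type*} [CommRing R] [Ring A] [Algebra R A] {q : R} {x y ξ η : A}

theorem pow_succ_mul_eta_eq (hxy : x * y = q • (y * x)) (hxξ : x * ξ = q ^ 2 • (ξ * x))
    (hxη : x * η = q • (η * x) + (q ^ 2 - 1) • (ξ * y)) (n : ℕ) :
    x ^ (n + 1) * η = q ^ (n + 1) • (η * x ^ (n + 1)) +
      ((q ^ 2 - 1) * ∑ k ∈ range (n + 1), q ^ (2 * k)) • (ξ * x ^ n * y) := by
  induction n with
  | zero => simpa using hxη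
  | succ n ih =>
    have hxy_pow : q ^ (n + 1) • (y * x ^ (n + 1)) = x ^ (n + 1) * y :=
      (pow_mul_eq_smul_mul_pow_of_mul_eq_smul hxy (n + 1)).symm
    have hQ : ∑ k ∈ range (n + 2), q ^ (2 * k) =
        q ^ 2 * ∑ k ∈ range (n + 1), q ^ (2 * k) + 1 := by
      simp only [pow_mul, geom_sum_succ]
    calc x ^ (n + 2) * η = x * (x ^ (n + 1) * η) := by rw [pow_succ' x (n + 1), mul_assoc]
      _ = q ^ (n + 1) • ((x * η) * x ^ (n + 1)) +
            ((q ^ 2 - 1) * ∑ k ∈ range (n + 1), q ^ (2 * k)) • ((x * ξ) * x ^ n * y) := by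
        rw [ih, mul_add, mul_smul_comm, mul_smul_comm, mul_assoc, mul_assoc, mul_assoc,
          mul_assoc]
      _ = q ^ (n + 2) • (η * x ^ (n + 2)) +
            ((q ^ 2 - 1) * ∑ k ∈ range (n + 2), q ^ (2 * k)) • (ξ * x ^ (n + 1) * y) := by
        rw [hxη, hxξ, add_mul, smul_mul_assoc, smul_mul_assoc, smul_mul_assoc, smul_mul_assoc,
          mul_assoc η x, ← pow_succ', mul_assoc ξ y, mul_assoc ξ x, ← pow_succ', smul_add,
          smul_comm (q ^ (n + 1)) (q ^ 2 - 1), ← mul_smul_comm (q ^ (n + 1)) ξ, hxy_pow,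
          ← mul_assoc, hQ]
        match_scalars <;> ring

end QuantumPlane

theorem xpow_eta_comm_general (q : ℂ) (Ω : Type*) [Ring Ω] [Algebra ℂ Ω]
    (x y ξ η : Ω)
    (hxy : x * y = q • (y * x))
    (hxξ : x * ξ = (q ^ 2) • (ξ * x))
    (hxη : x * η = q • (η * x) + (q ^ 2 - 1) • (ξ * y)) :
    ∀ n : ℕ, 1 ≤ n →
      x ^ n * η = (q ^ n) • (η * x ^ n) +
        ((q ^ 2 - 1) * ∑ k ∈ Finset.range n, q ^ (2 * k)) • (ξ * x ^ (n - 1) * y) := by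
  intro n hn
  obtain ⟨m, rfl⟩ := Nat.exists_eq_add_of_le' hn
  simpa using pow_succ_mul_eta_eq hxy hxξ hxη m

/-- in the quantum plane differential calculus,
x^n η = q^n η x^n + (q²−1) Q_n ξ x^{n−1} y for all n ≥ 1, where
Q_n = Σ_{k=1}^{n} q^{2(k−1)} (written below as Σ_{k=0}^{n-1} q^{2k}). -/
theorem xpow_eta_comm (q : ℂ) (hq : q ≠ 0) (Ω : Type*) [Ring Ω] [Algebra ℂ Ω]
    (x y ξ η : Ω)
    (hxy : x * y = q • (y * x))
    (hxξ : x * ξ = (q ^ 2) • (ξ * x))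
    (hxη : x * η = q • (η * x) + (q ^ 2 - 1) • (ξ * y))
    (hyξ : y * ξ = q • (ξ * y))
    (hyη : y * η = (q ^ 2) • (η * y))
    (hηξ : η * ξ = -(q • (ξ * η)))
    (hξξ : ξ * ξ = 0) (hηη : η * η = 0) :
    ∀ n : ℕ, 1 ≤ n →
      x ^ n * η = (q ^ n) • (η * x ^ n) +
        ((q ^ 2 - 1) * ∑ k ∈ Finset.range n, q ^ (2 * k)) • (ξ * x ^ (n - 1) * y) :=
  xpow_eta_comm_general q Ω x y ξ η hxy hxξ hxη
end

section
/- In the quantum plane at the cube root of unity, every element of Z(A) commutes with every element of the bimodule A¹ of 1-forms: for all a ∈ Z(A) and α ∈ A¹, aα = αa. -/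
/-!
Write `T_c z w = z w - c (w z)`. Since `1 + q + q² = 0`, the factorisation
`X³ - c³ = (X - c)(X - qc)(X - q²c)`, applied to the commuting operators of left and right
multiplication by `z`, gives `z³ w - c³ w z³ = T_{q²c} z (T_c z (T_{qc} z w))`. So for `c³ = 1`,
`z³` commutes with every `w` killed by `T_c z` or by `T_c z ∘ T_{qc} z`. The relations of the
quantum plane and of its 1-forms put each of `x, y, ξ, η` in such a kernel for `z = x` and for
`z = y`; the pair `x, η` needs two factors, as `T_q x η = (q² - 1) ξ y` and `ξ y` commutes with `x`.
Hence the span of the `x^{3i} y^{3j}` centralises `x, y, ξ, η`, so also the algebra they generate,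
which contains every 1-form.
-/

section TwistedCommutator

variable {R A : Type*} [CommRing R] [Ring A] [Algebra R A]

def twistedCommutator (c : R) (z : A) : A →ₗ[R] A :=
  LinearMap.mulLeft R z - c • LinearMap.mulRight R z

@[simp]
lemma twistedCommutator_apply (c : R) (z w : A) :
    twistedCommutator c z w = z * w - c • (w * z) :=
  rfl

lemma twistedCommutator_eq_zero_iff {c : R} {z w : A} :
    twistedCommutator c z w = 0 ↔ z * w = c • (w * z) :=
  sub_eq_zero

lemma pow_three_mul_sub_smul_mul_pow_three {q : R} (hq : 1 + q + q ^ 2 = 0) (c : R) (z w : A) :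
    z ^ 3 * w - c ^ 3 • (w * z ^ 3) = twistedCommutator (q ^ 2 * c) z
      (twistedCommutator c z (twistedCommutator (q * c) z w)) := by
  simp only [twistedCommutator_apply, mul_sub, sub_mul, smul_sub, mul_smul_comm, smul_mul_assoc,
    smul_smul, pow_three, mul_assoc]
  match_scalars
  · rfl
  · linear_combination (q - 1) * c ^ 3 * hq
  · linear_combination c * hq
  · linear_combination -q * c ^ 2 * hq

lemma commute_pow_three_of_twistedCommutator_twistedCommutator_eq_zero {q c : R}
    (hq : 1 + q + q ^ 2 = 0) (hc : c ^ 3 = 1) {z w : A}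
    (hw : twistedCommutator c z (twistedCommutator (q * c) z w) = 0) :
    Commute (z ^ 3) w := by
  have h := pow_three_mul_sub_smul_mul_pow_three hq c z w
  rwa [hw, map_zero, hc, one_smul, sub_eq_zero] at h

lemma commute_pow_three_of_mul_eq_smul_mul {q c : R} (hq : 1 + q + q ^ 2 = 0) (hc : c ^ 3 = 1)
    {z w : A} (h : z * w = c • (w * z)) : Commute (z ^ 3) w := by
  have hq3 : q ^ 3 = 1 := by linear_combination (q - 1) * hq
  refine commute_pow_three_of_twistedCommutator_twistedCommutator_eq_zero (c := q ^ 2 * c) hq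
    (by linear_combination (q ^ 3 + 1) * c ^ 3 * hq3 + hc) ?_
  rw [← mul_assoc, ← pow_succ', hq3, one_mul, twistedCommutator_eq_zero_iff.2 h, map_zero]

end TwistedCommutator

section QuantumPlane

variable {R Ω : Type*} [CommRing R] [Ring Ω] [Algebra R Ω] {q : R} {x y ξ η : Ω}

lemma x_pow_three_mem_centralizer (hq : 1 + q + q ^ 2 = 0) (hxy : x * y = q • (y * x))
    (hxξ : x * ξ = q ^ 2 • (ξ * x)) (hxη : x * η = q • (η * x) + (q ^ 2 - 1) • (ξ * y)) :
    x ^ 3 ∈ Subalgebra.centralizer R {x, y, ξ, η} := by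
  have hq3 : q ^ 3 = 1 := by linear_combination (q - 1) * hq
  have hxξy : x * (ξ * y) = (1 : R) • (ξ * y * x) := by
    rw [← mul_assoc, hxξ, smul_mul_assoc, mul_assoc, hxy, mul_smul_comm, smul_smul, ← pow_succ,
      hq3, mul_assoc]
  have hη : twistedCommutator (1 : R) x (twistedCommutator (q * 1) x η) = 0 := by
    rw [mul_one, twistedCommutator_apply q, hxη, add_sub_cancel_left, map_smul,
      twistedCommutator_eq_zero_iff.2 hxξy, smul_zero]
  simp only [Subalgebra.mem_centralizer_iff, Set.forall_mem_insert,
    Set.mem_singleton_iff, forall_eq]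
  exact ⟨(Commute.self_pow x 3).eq, (commute_pow_three_of_mul_eq_smul_mul hq hq3 hxy).symm.eq,
    (commute_pow_three_of_mul_eq_smul_mul hq (by linear_combination (q ^ 3 + 1) * hq3) hxξ).symm.eq,
    (commute_pow_three_of_twistedCommutator_twistedCommutator_eq_zero hq (one_pow 3) hη).symm.eq⟩

lemma y_pow_three_mem_centralizer (hq : 1 + q + q ^ 2 = 0) (hxy : x * y = q • (y * x))
    (hyξ : y * ξ = q • (ξ * y)) (hyη : y * η = q ^ 2 • (η * y)) :
    y ^ 3 ∈ Subalgebra.centralizer R {x, y, ξ, η} := by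
  have hq3 : q ^ 3 = 1 := by linear_combination (q - 1) * hq
  have hq6 : (q ^ 2) ^ 3 = 1 := by linear_combination (q ^ 3 + 1) * hq3
  have hyx : y * x = q ^ 2 • (x * y) := by
    rw [hxy, smul_smul, ← pow_succ, hq3, one_smul]
  simp only [Subalgebra.mem_centralizer_iff, Set.forall_mem_insert,
    Set.mem_singleton_iff, forall_eq]
  exact ⟨(commute_pow_three_of_mul_eq_smul_mul hq hq6 hyx).symm.eq, (Commute.self_pow y 3).eq,
    (commute_pow_three_of_mul_eq_smul_mul hq hq3 hyξ).symm.eq,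
    (commute_pow_three_of_mul_eq_smul_mul hq hq6 hyη).symm.eq⟩

end QuantumPlane

/-- in the quantum plane at the cube root of unity, every element
of Z(A) (the span of the monomials x^{3i}y^{3j}) commutes with every element of
the bimodule A¹ of 1-forms (elements ξu + ηv with u, v in the quantum plane A,
A¹ having right basis ξ, η). -/
theorem center_commutes_with_one_forms (q : ℂ) (hq : IsPrimitiveRoot q 3)
    (Ω : Type*) [Ring Ω] [Algebra ℂ Ω] (x y ξ η : Ω)
    (hxy : x * y = q • (y * x))
    (hxξ : x * ξ = (q ^ 2) • (ξ * x))
    (hxη : x * η = q • (η * x) + (q ^ 2 - 1) • (ξ * y))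
    (hyξ : y * ξ = q • (ξ * y))
    (hyη : y * η = (q ^ 2) • (η * y)) :
    ∀ a ∈ Submodule.span ℂ
        (Set.range fun p : ℕ × ℕ => x ^ (3 * p.1) * y ^ (3 * p.2)),
      ∀ u ∈ Algebra.adjoin ℂ ({x, y} : Set Ω),
        ∀ v ∈ Algebra.adjoin ℂ ({x, y} : Set Ω),
          a * (ξ * u + η * v) = (ξ * u + η * v) * a := by
  have hq' : 1 + q + q ^ 2 = 0 := by
    simpa [Finset.sum_range_succ] using hq.geom_sum_eq_zero (by norm_num)
  set S : Set Ω := {x, y, ξ, η}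
  have hZ : Submodule.span ℂ (Set.range fun p : ℕ × ℕ => x ^ (3 * p.1) * y ^ (3 * p.2)) ≤
      Subalgebra.toSubmodule (Subalgebra.centralizer ℂ S) := by
    rw [Submodule.span_le]
    rintro _ ⟨⟨i, j⟩, rfl⟩
    change x ^ (3 * i) * y ^ (3 * j) ∈ Subalgebra.centralizer ℂ S
    rw [pow_mul, pow_mul]
    exact mul_mem (pow_mem (x_pow_three_mem_centralizer hq' hxy hxξ hxη) i)
      (pow_mem (y_pow_three_mem_centralizer hq' hxy hyξ hyη) j)
  have hxyS : Algebra.adjoin ℂ {x, y} ≤ Algebra.adjoin ℂ S :=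
    Algebra.adjoin_mono (by simp [S, Set.insert_subset_iff])
  intro a ha u hu v hv
  have hω : ξ * u + η * v ∈ Algebra.adjoin ℂ S :=
    add_mem (mul_mem (Algebra.subset_adjoin (by simp [S])) (hxyS hu))
      (mul_mem (Algebra.subset_adjoin (by simp [S])) (hxyS hv))
  exact Algebra.adjoin_le_centralizer_centralizer ℂ S hω a (hZ ha)
end

section
/- In the quantum plane at the cube root of unity, the element c₁ξ + c₂η with c₁ = a·xy − b·xy³ and c₂ = b·x²y² (for a, b ∈ Z(A)) lies in the centre of the bimodule A¹; i.e., it commutes with both x and y. -/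
/-! Write the form as `a * (x * y * ξ) + b * (x ^ 2 * y ^ 2 * η - x * y ^ 3 * ξ)`. Apart from
`x * η`, every defining relation says that two generators q-commute, so a generator q-commutes
with a monomial, the scalar being the product of the scalars for its letters. Since `q ^ 3 = 1`
this makes `x ^ 3` and `y ^ 3`, hence all of `Z(A)`, central, and shows that `x` commutes with
`x * y * ξ` and `y` with `x * y * ξ`, `x ^ 2 * y ^ 2 * η`, `x * y ^ 3 * ξ`. The remaining relation
`x * η = q • (η * x) + (q ^ 2 - 1) • (ξ * y)` makes `x * (x ^ 2 * y ^ 2 * η)` pick up a multiple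
of `x ^ 2 * y ^ 3 * ξ`, which is exactly what the failure of `x * y ^ 3 * ξ` to commute with `x`
cancels. -/

def QCommute {R A : Type*} [Mul A] [SMul R A] (c : R) (a b : A) : Prop :=
  a * b = c • (b * a)

namespace QCommute

variable {R A : Type*} [CommMonoid R] [Monoid A] [MulAction R A] {a b e : A} {c d : R}

theorem refl (a : A) : QCommute (1 : R) a a := by
  rw [QCommute, one_smul]

theorem commute (h : QCommute c a b) (hc : c = 1) : Commute a b := by
  rw [Commute, SemiconjBy, h, hc, one_smul]

theorem symm (h : QCommute c a b) (hdc : d * c = 1) : QCommute d b a := by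
  rw [QCommute, h, smul_smul, hdc, one_smul]

variable [IsScalarTower R A A] [SMulCommClass R A A]

theorem mul_right (hb : QCommute c a b) (he : QCommute d a e) : QCommute (c * d) a (b * e) := by
  rw [QCommute, ← mul_assoc, hb, smul_mul_assoc, mul_assoc, he, mul_smul_comm, smul_smul,
    mul_assoc]

theorem mul_left (ha : QCommute c a b) (he : QCommute d e b) : QCommute (c * d) (a * e) b := by
  rw [QCommute, mul_assoc, he, mul_smul_comm, ← mul_assoc, ha, smul_mul_assoc, smul_smul,
    mul_assoc, mul_comm c]

theorem pow_right (h : QCommute c a b) (n : ℕ) : QCommute (c ^ n) a (b ^ n) := by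
  induction n with
  | zero => rw [pow_zero, pow_zero, QCommute, one_smul, one_mul, mul_one]
  | succ n ih => rw [pow_succ, pow_succ]; exact ih.mul_right h

theorem pow_left (h : QCommute c a b) (n : ℕ) : QCommute (c ^ n) (a ^ n) b := by
  induction n with
  | zero => rw [pow_zero, pow_zero, QCommute, one_smul, one_mul, mul_one]
  | succ n ih => rw [pow_succ', pow_succ']; exact h.mul_left ih

end QCommute

section Centre

variable {R A : Type*} [CommSemiring R] [Semiring A] [Algebra R A] {q : R} {x y : A}

theorem span_pow_three_le_centralizer (hxy : QCommute q x y) (hq : q ^ 3 = 1) :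
    Submodule.span R (Set.range fun p : ℕ × ℕ => x ^ (3 * p.1) * y ^ (3 * p.2)) ≤
      Subalgebra.toSubmodule (Subalgebra.centralizer R {x, y}) := by
  have hx : x ^ 3 ∈ Subalgebra.centralizer R {x, y} := by
    rw [Subalgebra.mem_centralizer_iff]
    rintro g (rfl | rfl)
    · exact (Commute.self_pow g 3).eq
    · exact ((hxy.pow_left 3).commute hq).symm.eq
  have hy : y ^ 3 ∈ Subalgebra.centralizer R {x, y} := by
    rw [Subalgebra.mem_centralizer_iff]
    rintro g (rfl | rfl)
    · exact ((hxy.pow_right 3).commute hq).eq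
    · exact (Commute.self_pow g 3).eq
  rw [Submodule.span_le]
  rintro _ ⟨⟨i, j⟩, rfl⟩
  simp only [SetLike.mem_coe, Subalgebra.mem_toSubmodule, pow_mul]
  exact mul_mem (pow_mem hx i) (pow_mem hy j)

theorem commute_of_mem_span_pow_three (hxy : QCommute q x y) (hq : q ^ 3 = 1) {z : A}
    (hz : z ∈ Submodule.span R (Set.range fun p : ℕ × ℕ => x ^ (3 * p.1) * y ^ (3 * p.2))) :
    Commute x z ∧ Commute y z := by
  have h := (Subalgebra.mem_centralizer_iff R).mp (span_pow_three_le_centralizer hxy hq hz)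
  exact ⟨h x (by simp), h y (by simp)⟩

end Centre

section OneForms

variable {R A : Type*} [CommRing R] [Ring A] [Algebra R A] {q : R} {x y ξ η : A}

theorem commute_x_xyξ (hxy : QCommute q x y) (hxξ : QCommute (q ^ 2) x ξ)
    (hq : q ^ 3 = 1) : Commute x (x * y * ξ) :=
  (((QCommute.refl x).mul_right hxy).mul_right hxξ).commute (by grind)

theorem commute_y_xyξ (hxy : QCommute q x y) (hyξ : QCommute q y ξ)
    (hq : q ^ 3 = 1) : Commute y (x * y * ξ) :=
  (((hxy.symm (d := q ^ 2) (by grind)).mul_right (QCommute.refl y)).mul_right hyξ).commute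
    (by grind)

theorem commute_y_x2y2η_sub_xy3ξ (hxy : QCommute q x y) (hyξ : QCommute q y ξ)
    (hyη : QCommute (q ^ 2) y η) (hq : q ^ 3 = 1) :
    Commute y (x ^ 2 * y ^ 2 * η - x * y ^ 3 * ξ) := by
  have hyx : QCommute (q ^ 2) y x := hxy.symm (by grind)
  refine .sub_right ?_ ?_
  · exact (((hyx.pow_right 2).mul_right ((QCommute.refl y).pow_right 2)).mul_right hyη).commute
      (by grind)
  · exact ((hyx.mul_right ((QCommute.refl y).pow_right 3)).mul_right hyξ).commute (by grind)

theorem commute_x_x2y2η_sub_xy3ξ (hxy : QCommute q x y) (hxξ : QCommute (q ^ 2) x ξ)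
    (hxη : x * η = q • (η * x) + (q ^ 2 - 1) • (ξ * y)) (hyξ : QCommute q y ξ)
    (hq : q ^ 3 = 1) :
    Commute x (x ^ 2 * y ^ 2 * η - x * y ^ 3 * ξ) := by
  have hxu : QCommute (q ^ 2) x (x ^ 2 * y ^ 2) := by
    simpa using ((QCommute.refl x).pow_right 2).mul_right (hxy.pow_right 2)
  have hxv : QCommute (q ^ 2) x (x * y ^ 3 * ξ) := by
    have h := ((QCommute.refl x).mul_right (hxy.pow_right 3)).mul_right hxξ
    rwa [hq, one_mul, one_mul] at h
  have huξy : x ^ 2 * y ^ 2 * (ξ * y) = q ^ 2 • (x ^ 2 * y ^ 3 * ξ) := by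
    rw [hyξ.symm (d := q ^ 2) (by grind), mul_smul_comm, ← mul_assoc, mul_assoc _ (y ^ 2),
      ← pow_succ]
  have hvx : x * y ^ 3 * ξ * x = q • (x ^ 2 * y ^ 3 * ξ) := by
    rw [mul_assoc _ ξ x, hxξ.symm (d := q) (by grind), mul_smul_comm, ← mul_assoc, mul_assoc x,
      ← ((hxy.pow_right 3).commute hq).eq, ← mul_assoc, ← sq]
  rw [Commute, SemiconjBy]
  calc x * (x ^ 2 * y ^ 2 * η - x * y ^ 3 * ξ)
      = q ^ 2 • (x ^ 2 * y ^ 2 * (x * η)) - q ^ 2 • (x * y ^ 3 * ξ * x) := by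
        rw [mul_sub, ← mul_assoc, hxu, hxv, smul_mul_assoc, mul_assoc]
    _ = q ^ 3 • (x ^ 2 * y ^ 2 * η * x) + (q ^ 2 * (q ^ 2 - 1)) • (x ^ 2 * y ^ 2 * (ξ * y))
          - q ^ 2 • (x * y ^ 3 * ξ * x) := by
        rw [hxη, mul_add, mul_smul_comm, mul_smul_comm, ← mul_assoc _ η x]; module
    _ = (x ^ 2 * y ^ 2 * η - x * y ^ 3 * ξ) * x := by
        rw [sub_mul, huξy, hvx]
        match_scalars <;> grind

end OneForms

/-- in the quantum plane at the cube root of unity, the 1-form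
c₁ξ + c₂η with c₁ = a·xy − b·xy³ and c₂ = b·x²y², for a, b ∈ Z(A) (the span of
the monomials x^{3i}y^{3j}), lies in the centre of the bimodule A¹: it
commutes with both generators x and y (hence with every element of A). -/
theorem central_one_form (q : ℂ) (hq : IsPrimitiveRoot q 3)
    (Ω : Type*) [Ring Ω] [Algebra ℂ Ω] (x y ξ η : Ω)
    (hxy : x * y = q • (y * x))
    (hxξ : x * ξ = (q ^ 2) • (ξ * x))
    (hxη : x * η = q • (η * x) + (q ^ 2 - 1) • (ξ * y))
    (hyξ : y * ξ = q • (ξ * y))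
    (hyη : y * η = (q ^ 2) • (η * y)) :
    ∀ a ∈ Submodule.span ℂ
        (Set.range fun p : ℕ × ℕ => x ^ (3 * p.1) * y ^ (3 * p.2)),
      ∀ b ∈ Submodule.span ℂ
        (Set.range fun p : ℕ × ℕ => x ^ (3 * p.1) * y ^ (3 * p.2)),
        x * ((a * x * y - b * x * y ^ 3) * ξ + (b * x ^ 2 * y ^ 2) * η)
          = ((a * x * y - b * x * y ^ 3) * ξ + (b * x ^ 2 * y ^ 2) * η) * x ∧
        y * ((a * x * y - b * x * y ^ 3) * ξ + (b * x ^ 2 * y ^ 2) * η)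
          = ((a * x * y - b * x * y ^ 3) * ξ + (b * x ^ 2 * y ^ 2) * η) * y := by
  have hq3 : q ^ 3 = 1 := hq.pow_eq_one
  intro a ha b hb
  obtain ⟨hax, hay⟩ := commute_of_mem_span_pow_three hxy hq3 ha
  obtain ⟨hbx, hby⟩ := commute_of_mem_span_pow_three hxy hq3 hb
  have hform : (a * x * y - b * x * y ^ 3) * ξ + (b * x ^ 2 * y ^ 2) * η
      = a * (x * y * ξ) + b * (x ^ 2 * y ^ 2 * η - x * y ^ 3 * ξ) := by
    noncomm_ring
  rw [hform]
  exact ⟨((hax.mul_right (commute_x_xyξ hxy hxξ hq3)).add_right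
      (hbx.mul_right (commute_x_x2y2η_sub_xy3ξ hxy hxξ hxη hyξ hq3))).eq,
    ((hay.mul_right (commute_y_xyξ hxy hyξ hq3)).add_right
      (hby.mul_right (commute_y_x2y2η_sub_xy3ξ hxy hyξ hyη hq3))).eq⟩
end

section
/- General left-to-right rewriting in the quantum plane calculus: for a = Σ a_{pr} x^p y^r and b = Σ b_{st} x^s y^t with complex coefficients, one has aξ + bη = ξ·ã + η·b̃, where ã = Σ (q^{2p+r} a_{pr} + q^{2r−2}(q²−1) Q_{p+1} b_{p+1,r−1}) x^p y^r (the term with r = 0 being q^{2p} a_{p0} x^p) and b̃ = Σ q^{2t+s} b_{st} x^s y^t, with Q_n = Σ_{k=1}^n q^{2(k−1)}. -/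
/-!
Move each monomial `x ^ p * y ^ r` past `ξ` and `η` one generator at a time. Every relation except
`x η = q η x + (q² - 1) ξ y` merely rescales, so `a ξ` and the `η`-part of `b η` just pick up
powers of `q`. Pushing `x ^ p` past `η` produces, besides `q ^ p η x ^ p`, a correction
`(q² - 1) Q_p ξ x ^ (p - 1) y`, where `Q_{p+1} = 1 + q² Q_p` because each earlier correction is
pushed past one more `x`. Collecting the corrections by the monomial they multiply shifts the
coefficients of `b` from `(s, t)` to `(s - 1, t + 1)`.
-/

open Finset

theorem pow_mul_eq_smul_mul_pow {R A : Type*} [CommSemiring R] [Semiring A] [Algebra R A]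
    {a b : A} {c : R} (h : a * b = c • (b * a)) (n : ℕ) :
    a ^ n * b = c ^ n • (b * a ^ n) := by
  induction n with
  | zero => simp
  | succ n ih =>
    rw [pow_succ, mul_assoc, h, mul_smul_comm, ← mul_assoc, ih, smul_mul_assoc, smul_smul,
      mul_assoc, pow_succ, mul_comm c]

-- The weight vanishing at `s = 0` is what keeps the truncated shift injective on the
-- surviving terms: `(0, t)` and `(1, t)` both land on `(0, t + 1)`.
theorem Finsupp.sum_shift_eq_sum_of_image_subset {R M : Type*} [Semiring R] [AddCommMonoid M]
    [Module R M] (b : ℕ × ℕ →₀ R) (w : ℕ × ℕ → R) (hw : ∀ t, w (0, t) = 0) (m : ℕ × ℕ → M)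
    {U : Finset (ℕ × ℕ)} (hU : b.support.image (fun st => (st.1 - 1, st.2 + 1)) ⊆ U) :
    (b.sum fun st c => (w st * c) • m (st.1 - 1, st.2 + 1))
      = ∑ p ∈ U, (if p.2 = 0 then 0 else w (p.1 + 1, p.2 - 1) * b (p.1 + 1, p.2 - 1)) • m p := by
  have fst_ne_zero {st : ℕ × ℕ} {c : R} (h : (w st * c) • m (st.1 - 1, st.2 + 1) ≠ 0) :
      st.1 ≠ 0 := by
    rintro h0
    obtain ⟨s, t⟩ := st
    simp_all
  refine sum_bij_ne_zero (fun st _ _ => (st.1 - 1, st.2 + 1))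
    (fun st hst _ => hU (mem_image_of_mem _ hst)) ?inj ?surj ?val
  case inj =>
    rintro ⟨s, t⟩ - hst ⟨s', t'⟩ - hst' h
    have := fst_ne_zero hst
    have := fst_ne_zero hst'
    simp only [Prod.mk.injEq] at h ⊢
    omega
  case surj =>
    rintro ⟨s, t⟩ - h
    have ht : t ≠ 0 := by rintro rfl; simp at h
    have hb : b (s + 1, t - 1) ≠ 0 := by rintro hb; simp [hb] at h
    refine ⟨(s + 1, t - 1), Finsupp.mem_support_iff.mpr hb, ?_, ?_⟩
    · simpa [ht, Nat.sub_add_cancel (Nat.pos_of_ne_zero ht)] using h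
    · simp [Nat.sub_add_cancel (Nat.pos_of_ne_zero ht)]
  case val =>
    rintro ⟨s, t⟩ - h
    have := fst_ne_zero h
    simp [Nat.sub_add_cancel (Nat.pos_of_ne_zero this)]

namespace QuantumPlane

variable {R A : Type*} [CommRing R] [Ring A] [Algebra R A] {q : R} {x y ξ η : A}

theorem x_pow_succ_mul_η (hxy : x * y = q • (y * x)) (hxξ : x * ξ = q ^ 2 • (ξ * x))
    (hxη : x * η = q • (η * x) + (q ^ 2 - 1) • (ξ * y)) (p : ℕ) :
    x ^ (p + 1) * η = q ^ (p + 1) • (η * x ^ (p + 1))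
      + ((q ^ 2 - 1) * ∑ k ∈ range (p + 1), q ^ (2 * k)) • (ξ * (x ^ p * y)) := by
  induction p with
  | zero => simpa using hxη
  | succ p ih =>
    rw [pow_succ' x (p + 1), mul_assoc, ih, mul_add, mul_smul_comm, mul_smul_comm, ← mul_assoc,
      ← mul_assoc, hxη, hxξ]
    simp only [add_mul, smul_mul_assoc, mul_assoc, ← pow_succ', mul_smul_comm, smul_add, smul_smul,
      pow_mul_eq_smul_mul_pow hxy (p + 1)]
    rw [← mul_assoc x, ← pow_succ', pow_mul_eq_smul_mul_pow hxy, mul_smul_comm, smul_smul]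
    simp only [pow_mul, geom_sum_succ (n := p + 1)]
    match_scalars <;> ring

theorem x_pow_mul_η (hxy : x * y = q • (y * x)) (hxξ : x * ξ = q ^ 2 • (ξ * x))
    (hxη : x * η = q • (η * x) + (q ^ 2 - 1) • (ξ * y)) (p : ℕ) :
    x ^ p * η = q ^ p • (η * x ^ p)
      + ((q ^ 2 - 1) * ∑ k ∈ range p, q ^ (2 * k)) • (ξ * (x ^ (p - 1) * y)) := by
  cases p with
  | zero => simp
  | succ p => exact x_pow_succ_mul_η hxy hxξ hxη p

theorem monomial_mul_ξ (hxξ : x * ξ = q ^ 2 • (ξ * x)) (hyξ : y * ξ = q • (ξ * y)) (p r : ℕ) :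
    x ^ p * y ^ r * ξ = q ^ (2 * p + r) • (ξ * (x ^ p * y ^ r)) := by
  rw [mul_assoc, pow_mul_eq_smul_mul_pow hyξ, mul_smul_comm, ← mul_assoc,
    pow_mul_eq_smul_mul_pow hxξ, smul_mul_assoc, smul_smul, mul_assoc, pow_add, pow_mul,
    mul_comm (q ^ r)]

theorem monomial_mul_η (hxy : x * y = q • (y * x)) (hxξ : x * ξ = q ^ 2 • (ξ * x))
    (hxη : x * η = q • (η * x) + (q ^ 2 - 1) • (ξ * y)) (hyη : y * η = q ^ 2 • (η * y))
    (p r : ℕ) :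
    x ^ p * y ^ r * η = q ^ (2 * r + p) • (η * (x ^ p * y ^ r))
      + (q ^ (2 * r) * (q ^ 2 - 1) * ∑ k ∈ range p, q ^ (2 * k))
          • (ξ * (x ^ (p - 1) * y ^ (r + 1))) := by
  rw [mul_assoc, pow_mul_eq_smul_mul_pow hyη, mul_smul_comm, ← mul_assoc,
    x_pow_mul_η hxy hxξ hxη]
  simp only [add_mul, smul_mul_assoc, mul_assoc, ← pow_succ', smul_add, smul_smul]
  match_scalars <;> ring

theorem sum_mul_ξ (hxξ : x * ξ = q ^ 2 • (ξ * x)) (hyξ : y * ξ = q • (ξ * y))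
    (a : ℕ × ℕ →₀ R) :
    (a.sum fun p c => c • (x ^ p.1 * y ^ p.2)) * ξ
      = ξ * a.sum fun p c => (q ^ (2 * p.1 + p.2) * c) • (x ^ p.1 * y ^ p.2) := by
  simp only [Finsupp.sum_mul, Finsupp.mul_sum, smul_mul_assoc, monomial_mul_ξ hxξ hyξ,
    mul_smul_comm, smul_smul, mul_comm]

theorem sum_mul_η (hxy : x * y = q • (y * x)) (hxξ : x * ξ = q ^ 2 • (ξ * x))
    (hxη : x * η = q • (η * x) + (q ^ 2 - 1) • (ξ * y)) (hyη : y * η = q ^ 2 • (η * y))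
    (b : ℕ × ℕ →₀ R) :
    (b.sum fun p c => c • (x ^ p.1 * y ^ p.2)) * η
      = η * (b.sum fun p c => (q ^ (2 * p.2 + p.1) * c) • (x ^ p.1 * y ^ p.2))
        + ξ * b.sum fun p c => (q ^ (2 * p.2) * (q ^ 2 - 1) * (∑ k ∈ range p.1, q ^ (2 * k)) * c)
            • (x ^ (p.1 - 1) * y ^ (p.2 + 1)) := by
  simp only [Finsupp.sum_mul, Finsupp.mul_sum, ← Finsupp.sum_add, smul_mul_assoc,
    monomial_mul_η hxy hxξ hxη hyη, smul_add, mul_smul_comm, smul_smul, mul_comm]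

end QuantumPlane

theorem general_rewriting_general (q : ℂ)
    (Ω : Type*) [Ring Ω] [Algebra ℂ Ω] (x y ξ η : Ω)
    (hxy : x * y = q • (y * x))
    (hxξ : x * ξ = (q ^ 2) • (ξ * x))
    (hxη : x * η = q • (η * x) + (q ^ 2 - 1) • (ξ * y))
    (hyξ : y * ξ = q • (ξ * y))
    (hyη : y * η = (q ^ 2) • (η * y))
    (ac bc : (ℕ × ℕ) →₀ ℂ) :
    (ac.sum fun p c => c • (x ^ p.1 * y ^ p.2)) * ξ
      + (bc.sum fun p c => c • (x ^ p.1 * y ^ p.2)) * η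
    = ξ * (∑ p ∈ ac.support ∪
            bc.support.image (fun st : ℕ × ℕ => (st.1 - 1, st.2 + 1)),
          (q ^ (2 * p.1 + p.2) * ac p +
            (if p.2 = 0 then 0 else
              q ^ (2 * (p.2 - 1)) * (q ^ 2 - 1) *
                (∑ k ∈ Finset.range (p.1 + 1), q ^ (2 * k)) *
                bc (p.1 + 1, p.2 - 1))) • (x ^ p.1 * y ^ p.2))
      + η * (bc.sum fun p c => (q ^ (2 * p.2 + p.1) * c) • (x ^ p.1 * y ^ p.2)) := by
  rw [QuantumPlane.sum_mul_ξ hxξ hyξ, QuantumPlane.sum_mul_η hxy hxξ hxη hyη,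
    Finsupp.sum_of_support_subset ac subset_union_left _ (fun _ _ => by simp),
    Finsupp.sum_shift_eq_sum_of_image_subset bc _ (fun _ => by simp) (fun p => x ^ p.1 * y ^ p.2)
      subset_union_right]
  simp only [add_smul, sum_add_distrib, mul_add]
  abel

/-- general left-to-right rewriting in the quantum plane
calculus.  For a = Σ a_{pr} x^p y^r and b = Σ b_{st} x^s y^t (finitely
supported complex coefficients `ac`, `bc`), one has aξ + bη = ξ·ã + η·b̃,
where ã = Σ (q^{2p+r} a_{pr} + q^{2(r−1)}(q²−1) Q_{p+1} b_{p+1,r−1}) x^p y^r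
(the term with r = 0 being q^{2p} a_{p0} x^p) and b̃ = Σ q^{2t+s} b_{st} x^s y^t,
with Q_n = Σ_{k=1}^n q^{2(k−1)} = Σ_{k=0}^{n-1} q^{2k}. -/
theorem general_rewriting (q : ℂ) (hq : q ≠ 0)
    (Ω : Type*) [Ring Ω] [Algebra ℂ Ω] (x y ξ η : Ω)
    (hxy : x * y = q • (y * x))
    (hxξ : x * ξ = (q ^ 2) • (ξ * x))
    (hxη : x * η = q • (η * x) + (q ^ 2 - 1) • (ξ * y))
    (hyξ : y * ξ = q • (ξ * y))
    (hyη : y * η = (q ^ 2) • (η * y))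
    (ac bc : (ℕ × ℕ) →₀ ℂ) :
    (ac.sum fun p c => c • (x ^ p.1 * y ^ p.2)) * ξ
      + (bc.sum fun p c => c • (x ^ p.1 * y ^ p.2)) * η
    = ξ * (∑ p ∈ ac.support ∪
            bc.support.image (fun st : ℕ × ℕ => (st.1 - 1, st.2 + 1)),
          (q ^ (2 * p.1 + p.2) * ac p +
            (if p.2 = 0 then 0 else
              q ^ (2 * (p.2 - 1)) * (q ^ 2 - 1) *
                (∑ k ∈ Finset.range (p.1 + 1), q ^ (2 * k)) *
                bc (p.1 + 1, p.2 - 1))) • (x ^ p.1 * y ^ p.2))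
      + η * (bc.sum fun p c => (q ^ (2 * p.2 + p.1) * c) • (x ^ p.1 * y ^ p.2)) :=
  general_rewriting_general q Ω x y ξ η hxy hxξ hxη hyξ hyη ac bc
end
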